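/- arXiv:2111.15645 — 5 statements merged into one kernel-verified Lean document; each statement's English description precedes it below -/
import Mathlib

section
/- If f₁, ..., f_k : ℝⁿ → ℝ are L-smooth (gradients L-Lipschitz) and δ-strongly convex (0 < δ ≤ L), a point s satisfies f_i(s) > f_j(s) for all j ≠ i, and a point s⁺ ≠ s satisfies with equality f_i(s) + ∇f_i(s)ᵀ(s⁺ - s) = f_j(s_j) + ∇f_j(s_j)ᵀ(s⁺ - s_j) + (L/2)‖s⁺ - s_j‖² for every j ≠ i (where s_j are points with f_j(s_j) ≥ f_l(s_j) for all l), then f_i(s⁺) > f_j(s⁺) for all j ≠ i. -/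
/-!
The tight constraints say that at `s⁺` the tangent plane of `f i` at `s i` equals the
`L`-smoothness majorant of `f j` built at `s j`, so it bounds `f j s⁺` from above; strong
convexity puts `f i s⁺` strictly above that tangent plane because `s⁺ ≠ s i`.
-/

open RealInnerProductSpace

theorem tangent_lt_of_strongConvexity_bound {E : Type*} [NormedAddCommGroup E]
    [InnerProductSpace ℝ E] {g : E → ℝ} {x y v : E} {δ : ℝ} (hδ : 0 < δ) (hyx : y ≠ x)
    (hg : g x + ⟪v, y - x⟫ + δ / 2 * ‖y - x‖ ^ 2 ≤ g y) :
    g x + ⟪v, y - x⟫ < g y := by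
  have : 0 < δ / 2 * ‖y - x‖ ^ 2 := by
    have : 0 < ‖y - x‖ := norm_pos_iff.mpr (sub_ne_zero.mpr hyx)
    positivity
  linarith

theorem survey_descent_preservation_of_validity_general
    (n k : ℕ) (f : Fin k → EuclideanSpace ℝ (Fin n) → ℝ)
    (δ L : ℝ) (hδ : 0 < δ)
    (hstrong : ∀ j (x y : EuclideanSpace ℝ (Fin n)),
      f j x + ⟪gradient (f j) x, y - x⟫ + δ / 2 * ‖y - x‖ ^ 2 ≤ f j y)
    (hsmooth : ∀ j (x y : EuclideanSpace ℝ (Fin n)),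
      f j y ≤ f j x + ⟪gradient (f j) x, y - x⟫ + L / 2 * ‖y - x‖ ^ 2)
    (s : Fin k → EuclideanSpace ℝ (Fin n)) (i : Fin k)
    (splus : EuclideanSpace ℝ (Fin n)) (hne : splus ≠ s i)
    (htight : ∀ j, j ≠ i →
      f i (s i) + ⟪gradient (f i) (s i), splus - s i⟫ =
        f j (s j) + ⟪gradient (f j) (s j), splus - s j⟫ + L / 2 * ‖splus - s j‖ ^ 2) :
    ∀ j, j ≠ i → f j splus < f i splus := by
  intro j hj
  calc f j splus
      ≤ f j (s j) + ⟪gradient (f j) (s j), splus - s j⟫ + L / 2 * ‖splus - s j‖ ^ 2 :=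
        hsmooth j (s j) splus
    _ = f i (s i) + ⟪gradient (f i) (s i), splus - s i⟫ := (htight j hj).symm
    _ < f i splus := tangent_lt_of_strongConvexity_bound hδ hne (hstrong i (s i) splus)

/-- **Preservation of validity** (Theorem 3.4 of the paper).
If each `f j` is `δ`-strongly convex and `L`-smooth, the point `s i` is strictly valid
for the `i`-th piece, each `s j` satisfies `f j (s j) ≥ f l (s j)` for all `l`, and
`s⁺ ≠ s i` satisfies all constraints with equality, then `f i s⁺ > f j s⁺` for `j ≠ i`. -/
theorem survey_descent_preservation_of_validity
    (n k : ℕ) (f : Fin k → EuclideanSpace ℝ (Fin n) → ℝ)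
    (δ L : ℝ) (hδ : 0 < δ) (hδL : δ ≤ L)
    (hstrong : ∀ j (x y : EuclideanSpace ℝ (Fin n)),
      f j x + ⟪gradient (f j) x, y - x⟫ + δ / 2 * ‖y - x‖ ^ 2 ≤ f j y)
    (hsmooth : ∀ j (x y : EuclideanSpace ℝ (Fin n)),
      f j y ≤ f j x + ⟪gradient (f j) x, y - x⟫ + L / 2 * ‖y - x‖ ^ 2)
    (s : Fin k → EuclideanSpace ℝ (Fin n)) (i : Fin k)
    (hvalid : ∀ j, j ≠ i → f j (s i) < f i (s i))
    (hmax : ∀ j l, f l (s j) ≤ f j (s j))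
    (splus : EuclideanSpace ℝ (Fin n)) (hne : splus ≠ s i)
    (htight : ∀ j, j ≠ i →
      f i (s i) + ⟪gradient (f i) (s i), splus - s i⟫ =
        f j (s j) + ⟪gradient (f j) (s j), splus - s j⟫ + L / 2 * ‖splus - s j‖ ^ 2) :
    ∀ j, j ≠ i → f j splus < f i splus :=
  survey_descent_preservation_of_validity_general n k f δ L hδ hstrong hsmooth s i splus hne htight
end

section
/- Let f : ℝⁿ → ℝ be δ-strongly convex and L-smooth (0 < δ ≤ L), let U ⊆ ℝⁿ be a nonempty closed affine subspace, and let x̄ = argmin_{x ∈ U} f(x). Then for any s ∈ ℝⁿ and any L̃ ≥ L, the projected gradient step p = proj_U(s - (1/L̃)∇f(s)) satisfies ‖p - x̄‖² ≤ (1 - δ/L̃)‖s - x̄‖². -/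
open RealInnerProductSpace

/-!
Write `g = ∇f(s)`. Since `p` is the nearest point of the convex set `U` to `s - g / L̃`, the
variational inequality gives `L̃ ⟪s - p, x̄ - p⟫ ≤ ⟪g, x̄ - p⟫`. Strong convexity at `s` towards
`x̄`, minimality of `x̄` and smoothness at `s` towards `p` give
`⟪g, x̄ - p⟫ + δ/2 ‖s - x̄‖² ≤ L̃/2 ‖s - p‖²`. Expanding `‖s - x̄‖² = ‖(s - p) - (x̄ - p)‖²`,
these two inequalities combine linearly into `L̃ ‖p - x̄‖² ≤ (L̃ - δ) ‖s - x̄‖²`.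
-/

section

variable {F : Type*} [NormedAddCommGroup F] [InnerProductSpace ℝ F]

theorem real_inner_sub_le_zero_of_forall_norm_sub_le {K : Set F} (hK : Convex ℝ K) {y p : F}
    (hp : p ∈ K) (hmin : ∀ q ∈ K, ‖y - p‖ ≤ ‖y - q‖) {q : F} (hq : q ∈ K) :
    ⟪y - p, q - p⟫ ≤ 0 := by
  have : Nonempty K := ⟨⟨p, hp⟩⟩
  have hinf : ‖y - p‖ = ⨅ w : K, ‖y - w‖ :=
    le_antisymm (le_ciInf fun w => hmin w w.2)
      (ciInf_le ⟨0, Set.forall_mem_range.2 fun _ => norm_nonneg _⟩ (⟨p, hp⟩ : K))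
  exact (norm_eq_iInf_iff_real_inner_le_zero hK hp).1 hinf q hq

theorem norm_sub_sq_le_of_inner_le {s p x g : F} {δ Lt : ℝ} (hLt : 0 < Lt)
    (hvar : Lt * ⟪s - p, x - p⟫ ≤ ⟪g, x - p⟫)
    (hdesc : ⟪g, x - p⟫ + δ / 2 * ‖s - x‖ ^ 2 ≤ Lt / 2 * ‖s - p‖ ^ 2) :
    ‖p - x‖ ^ 2 ≤ (1 - δ / Lt) * ‖s - x‖ ^ 2 := by
  have hexpand : ‖s - x‖ ^ 2 = ‖s - p‖ ^ 2 - 2 * ⟪s - p, x - p⟫ + ‖p - x‖ ^ 2 := by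
    rw [← sub_sub_sub_cancel_right s x p, norm_sub_sq_real, norm_sub_rev x p]
  rw [one_sub_div hLt.ne', div_mul_eq_mul_div, le_div_iff₀ hLt]
  linear_combination 2 * hvar + 2 * hdesc - Lt * hexpand

end

theorem projected_gradient_descent_contraction_general
    (n : ℕ) (f : EuclideanSpace ℝ (Fin n) → ℝ)
    (δ L : ℝ) (hδ : 0 < δ) (hδL : δ ≤ L)
    (hstrong : ∀ x y : EuclideanSpace ℝ (Fin n),
      f x + ⟪gradient f x, y - x⟫ + δ / 2 * ‖y - x‖ ^ 2 ≤ f y)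
    (hsmooth : ∀ x y : EuclideanSpace ℝ (Fin n),
      f y ≤ f x + ⟪gradient f x, y - x⟫ + L / 2 * ‖y - x‖ ^ 2)
    (U : AffineSubspace ℝ (EuclideanSpace ℝ (Fin n)))
    (xbar : EuclideanSpace ℝ (Fin n)) (hxbarU : xbar ∈ U)
    (hxbarmin : ∀ q ∈ U, f xbar ≤ f q)
    (s : EuclideanSpace ℝ (Fin n)) (Lt : ℝ) (hLt : L ≤ Lt)
    (p : EuclideanSpace ℝ (Fin n)) (hpU : p ∈ U)
    (hproj : ∀ q ∈ U, ‖s - (1 / Lt) • gradient f s - p‖ ≤ ‖s - (1 / Lt) • gradient f s - q‖) :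
    ‖p - xbar‖ ^ 2 ≤ (1 - δ / Lt) * ‖s - xbar‖ ^ 2 := by
  have hLt0 : 0 < Lt := hδ.trans_le (hδL.trans hLt)
  set g := gradient f s
  have hvar : Lt * ⟪s - p, xbar - p⟫ ≤ ⟪g, xbar - p⟫ := by
    have h := real_inner_sub_le_zero_of_forall_norm_sub_le U.convex hpU hproj hxbarU
    rw [sub_right_comm, inner_sub_left, real_inner_smul_left, sub_nonpos,
      one_div, le_inv_mul_iff₀ hLt0] at h
    exact h
  have hdesc : ⟪g, xbar - p⟫ + δ / 2 * ‖s - xbar‖ ^ 2 ≤ Lt / 2 * ‖s - p‖ ^ 2 := by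
    have hgap : ⟪g, xbar - p⟫ = ⟪g, xbar - s⟫ - ⟪g, p - s⟫ := by
      rw [← inner_sub_right, sub_sub_sub_cancel_right]
    have hLsq : L / 2 * ‖p - s‖ ^ 2 ≤ Lt / 2 * ‖p - s‖ ^ 2 := by gcongr
    rw [hgap, norm_sub_rev s xbar, norm_sub_rev s p]
    linarith [hstrong s xbar, hxbarmin p hpU, hsmooth s p]
  exact norm_sub_sq_le_of_inner_le hLt0 hvar hdesc

/-- **Projected gradient descent contraction onto an affine subspace**
(first part of Theorem 5.1 of the paper). If `f` is `δ`-strongly convex and `L`-smooth,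
`U` is a nonempty closed affine subspace, `x̄` is the minimizer of `f` over `U`, and `p`
is the Euclidean projection onto `U` of the gradient step `s - (1/L̃) • ∇f(s)` with
`L̃ ≥ L`, then `‖p - x̄‖² ≤ (1 - δ/L̃) ‖s - x̄‖²`. -/
theorem projected_gradient_descent_contraction
    (n : ℕ) (f : EuclideanSpace ℝ (Fin n) → ℝ)
    (δ L : ℝ) (hδ : 0 < δ) (hδL : δ ≤ L)
    (hstrong : ∀ x y : EuclideanSpace ℝ (Fin n),
      f x + ⟪gradient f x, y - x⟫ + δ / 2 * ‖y - x‖ ^ 2 ≤ f y)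
    (hsmooth : ∀ x y : EuclideanSpace ℝ (Fin n),
      f y ≤ f x + ⟪gradient f x, y - x⟫ + L / 2 * ‖y - x‖ ^ 2)
    (U : AffineSubspace ℝ (EuclideanSpace ℝ (Fin n)))
    (hUne : (U : Set (EuclideanSpace ℝ (Fin n))).Nonempty)
    (hUclosed : IsClosed (U : Set (EuclideanSpace ℝ (Fin n))))
    (xbar : EuclideanSpace ℝ (Fin n)) (hxbarU : xbar ∈ U)
    (hxbarmin : ∀ q ∈ U, f xbar ≤ f q)
    (s : EuclideanSpace ℝ (Fin n)) (Lt : ℝ) (hLt : L ≤ Lt)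
    (p : EuclideanSpace ℝ (Fin n)) (hpU : p ∈ U)
    (hproj : ∀ q ∈ U, ‖s - (1 / Lt) • gradient f s - p‖ ≤ ‖s - (1 / Lt) • gradient f s - q‖) :
    ‖p - xbar‖ ^ 2 ≤ (1 - δ / Lt) * ‖s - xbar‖ ^ 2 :=
  projected_gradient_descent_contraction_general n f δ L hδ hδL hstrong hsmooth U xbar hxbarU
    hxbarmin s Lt hLt p hpU hproj
end

section
/- Let f : ℝⁿ → ℝ be δ-strongly convex and L-smooth, U a nonempty closed affine subspace, x̄ = argmin_{x ∈ U} f(x), s ∈ ℝⁿ, and L̃ ≥ L. Then the projected gradient step p = proj_U(s - (1/L̃)∇f(s)) satisfies f(p) - f(x̄) ≤ (L̃/2)(1 - δ/L̃)‖s - x̄‖². -/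
open RealInnerProductSpace

/-!
Write `g = ∇f(s)`. Smoothness at `s` bounds `f p` from above and strong convexity at `s` bounds
`f x̄` from below, so `f p - f x̄ ≤ ⟪g, p - x̄⟫ + (L/2)‖s - p‖² - (δ/2)‖s - x̄‖²`. Since
`x̄ ∈ U`, the variational inequality of the projection gives `⟪g, p - x̄⟫ ≤ L̃ ⟪s - p, p - x̄⟫`,
and the three-point identity turns `L̃ ⟪s - p, p - x̄⟫ + (L̃/2)‖s - p‖²` into
`(L̃/2)(‖s - x̄‖² - ‖p - x̄‖²) ≤ (L̃/2)‖s - x̄‖²`.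
-/

section

variable {F : Type*} [NormedAddCommGroup F] [InnerProductSpace ℝ F]

theorem real_inner_sub_sub_nonpos_of_forall_norm_sub_le {K : Set F} (hK : Convex ℝ K)
    {z p : F} (hp : p ∈ K) (hmin : ∀ q ∈ K, ‖z - p‖ ≤ ‖z - q‖) :
    ∀ q ∈ K, ⟪z - p, q - p⟫ ≤ 0 := by
  have : Nonempty K := ⟨⟨p, hp⟩⟩
  refine (norm_eq_iInf_iff_real_inner_le_zero hK hp).1 (le_antisymm ?_ ?_)
  · exact le_ciInf fun q ↦ hmin q q.2
  · exact ciInf_le (f := fun q : K ↦ ‖z - q‖) ⟨0, by rintro _ ⟨q, rfl⟩; exact norm_nonneg _⟩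
      ⟨p, hp⟩

theorem real_inner_le_mul_inner_of_gradient_step {g s p x : F} {t : ℝ} (ht : 0 < t)
    (hproj : ⟪s - (1 / t) • g - p, x - p⟫ ≤ 0) :
    ⟪g, p - x⟫ ≤ t * ⟪s - p, p - x⟫ := by
  have hsplit : ⟪s - (1 / t) • g - p, x - p⟫ = (1 / t) * ⟪g, p - x⟫ - ⟪s - p, p - x⟫ := by
    rw [show s - (1 / t) • g - p = (s - p) - (1 / t) • g by abel,
      show x - p = -(p - x) by abel, inner_sub_left, real_inner_smul_left,
      inner_neg_right, inner_neg_right]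
    ring
  have h : (1 / t) * ⟪g, p - x⟫ ≤ ⟪s - p, p - x⟫ := by linarith
  rwa [one_div, inv_mul_le_iff₀ ht] at h

theorem two_mul_real_inner_add_norm_sq (s p x : F) :
    2 * ⟪s - p, p - x⟫ + ‖s - p‖ ^ 2 = ‖s - x‖ ^ 2 - ‖p - x‖ ^ 2 := by
  rw [show s - x = (s - p) + (p - x) by abel, norm_add_sq_real]
  ring

theorem sub_le_of_projected_gradient_step {f : F → ℝ} {g s p x : F} {δ L t : ℝ}
    (ht : 0 < t) (hLt : L ≤ t)
    (hupper : f p ≤ f s + ⟪g, p - s⟫ + L / 2 * ‖p - s‖ ^ 2)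
    (hlower : f s + ⟪g, x - s⟫ + δ / 2 * ‖x - s‖ ^ 2 ≤ f x)
    (hproj : ⟪s - (1 / t) • g - p, x - p⟫ ≤ 0) :
    f p - f x ≤ (t - δ) / 2 * ‖s - x‖ ^ 2 := by
  have hstep := real_inner_le_mul_inner_of_gradient_step ht hproj
  have hthree := two_mul_real_inner_add_norm_sq s p x
  have hsplit : ⟪g, p - s⟫ = ⟪g, p - x⟫ + ⟪g, x - s⟫ := by
    rw [← inner_add_right, sub_add_sub_cancel]
  rw [norm_sub_rev] at hupper hlower
  have hslack : 0 ≤ (t - L) * ‖s - p‖ ^ 2 := mul_nonneg (sub_nonneg.2 hLt) (sq_nonneg _)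
  have hdist : 0 ≤ t * ‖p - x‖ ^ 2 := mul_nonneg ht.le (sq_nonneg _)
  linear_combination hupper + hlower + hsplit + hstep + t / 2 * hthree + hslack / 2 + hdist / 2

end

theorem projected_gradient_descent_value_decrease_general
    (n : ℕ) (f : EuclideanSpace ℝ (Fin n) → ℝ)
    (δ L : ℝ) (hδ : 0 < δ) (hδL : δ ≤ L)
    (hstrong : ∀ x y : EuclideanSpace ℝ (Fin n),
      f x + ⟪gradient f x, y - x⟫ + δ / 2 * ‖y - x‖ ^ 2 ≤ f y)
    (hsmooth : ∀ x y : EuclideanSpace ℝ (Fin n),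
      f y ≤ f x + ⟪gradient f x, y - x⟫ + L / 2 * ‖y - x‖ ^ 2)
    (U : AffineSubspace ℝ (EuclideanSpace ℝ (Fin n)))
    (xbar : EuclideanSpace ℝ (Fin n)) (hxbarU : xbar ∈ U)
    (s : EuclideanSpace ℝ (Fin n)) (Lt : ℝ) (hLt : L ≤ Lt)
    (p : EuclideanSpace ℝ (Fin n)) (hpU : p ∈ U)
    (hproj : ∀ q ∈ U, ‖s - (1 / Lt) • gradient f s - p‖ ≤ ‖s - (1 / Lt) • gradient f s - q‖) :
    f p - f xbar ≤ Lt / 2 * (1 - δ / Lt) * ‖s - xbar‖ ^ 2 := by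
  have hLt_pos : 0 < Lt := by linarith
  have hvar := real_inner_sub_sub_nonpos_of_forall_norm_sub_le U.convex hpU hproj xbar hxbarU
  have hrhs : Lt / 2 * (1 - δ / Lt) = (Lt - δ) / 2 := by field_simp
  rw [hrhs]
  exact sub_le_of_projected_gradient_step hLt_pos hLt (hsmooth s p) (hstrong s xbar) hvar

/-- **Projected gradient descent contraction onto an affine subspace**
(first part of Theorem 5.1 of the paper). If `f` is `δ`-strongly convex and `L`-smooth,
`U` is a nonempty closed affine subspace, `x̄` is the minimizer of `f` over `U`, and `p`
is the Euclidean projection onto `U` of the gradient step `s - (1/L̃) • ∇f(s)` with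
`L̃ ≥ L`, then `‖p - x̄‖² ≤ (1 - δ/L̃) ‖s - x̄‖²`. -/
theorem projected_gradient_descent_value_decrease
    (n : ℕ) (f : EuclideanSpace ℝ (Fin n) → ℝ)
    (δ L : ℝ) (hδ : 0 < δ) (hδL : δ ≤ L)
    (hstrong : ∀ x y : EuclideanSpace ℝ (Fin n),
      f x + ⟪gradient f x, y - x⟫ + δ / 2 * ‖y - x‖ ^ 2 ≤ f y)
    (hsmooth : ∀ x y : EuclideanSpace ℝ (Fin n),
      f y ≤ f x + ⟪gradient f x, y - x⟫ + L / 2 * ‖y - x‖ ^ 2)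
    (U : AffineSubspace ℝ (EuclideanSpace ℝ (Fin n)))
    (hUne : (U : Set (EuclideanSpace ℝ (Fin n))).Nonempty)
    (hUclosed : IsClosed (U : Set (EuclideanSpace ℝ (Fin n))))
    (xbar : EuclideanSpace ℝ (Fin n)) (hxbarU : xbar ∈ U)
    (hxbarmin : ∀ q ∈ U, f xbar ≤ f q)
    (s : EuclideanSpace ℝ (Fin n)) (Lt : ℝ) (hLt : L ≤ Lt)
    (p : EuclideanSpace ℝ (Fin n)) (hpU : p ∈ U)
    (hproj : ∀ q ∈ U, ‖s - (1 / Lt) • gradient f s - p‖ ≤ ‖s - (1 / Lt) • gradient f s - q‖) :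
    f p - f xbar ≤ Lt / 2 * (1 - δ / Lt) * ‖s - xbar‖ ^ 2 :=
  projected_gradient_descent_value_decrease_general n f δ L hδ hδL hstrong hsmooth U xbar hxbarU s
    Lt hLt p hpU hproj
end

section
/- Suppose f₁,...,f_k : ℝⁿ → ℝ are δ-strongly convex, L-smooth functions, U is a closed affine subspace, and x̄ ∈ U satisfies proj_U(s - (1/L̃)∇f_j(s)) contraction: ‖proj_U(s - (1/L̃)∇f_j(s)) - x̄‖² ≤ (1 - δ/L̃)‖s - x̄‖² for all j and all L̃ ≥ L. Let λ̄₁,...,λ̄_k > 0 be weights summing to 1, fix i, and given points s₁,...,s_k define s̃_i = (1/(2-λ̄_i))·proj_U(s_i - (λ̄_i/L)∇f_i(s_i)) + Σ_{j≠i} (λ̄_j/(2-λ̄_i))·proj_U(s_j - (1/L)∇f_j(s_j)). Let λ̄_min = min_j λ̄_j. Then ‖s̃_i - x̄‖² ≤ (1 - λ̄_min·δ/L)·max_j ‖s_j - x̄‖². -/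
/-! The vector `s̃ᵢ - x̄` is a convex combination, with weights `1/(2-λᵢ)` and `λⱼ/(2-λᵢ)`, of the
differences `Pⱼ - x̄` of the projected gradient steps, so by convexity of `‖·‖²` its squared norm
is at most the same combination of the `‖Pⱼ - x̄‖²`. The `i`-th step has step size
`λᵢ/L = 1/(L/λᵢ)` and contracts at rate `1 - λᵢδ/L`, the others at rate `1 - δ/L`. The mixed rate
is `1 - (δ/L)/(2-λᵢ)`, and `λ_min (2-λᵢ) ≤ λᵢ (2-λᵢ) ≤ 1`. -/

open Finset

theorem sq_norm_smul_add_sum_smul_le {E ι : Type*} [SeminormedAddCommGroup E] [NormedSpace ℝ E]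
    (t : Finset ι) {a : ℝ} {w : ι → ℝ} (x : E) (y : ι → E) (ha : 0 ≤ a)
    (hw : ∀ j ∈ t, 0 ≤ w j) (hsum : a + ∑ j ∈ t, w j = 1) :
    ‖a • x + ∑ j ∈ t, w j • y j‖ ^ 2 ≤ a * ‖x‖ ^ 2 + ∑ j ∈ t, w j * ‖y j‖ ^ 2 := by
  have hconv : ConvexOn ℝ Set.univ fun z : E => ‖z‖ ^ 2 :=
    (convexOn_norm convex_univ).pow (fun _ _ => norm_nonneg _) 2
  have := hconv.map_sum_le (t := insertNone t) (w := fun o => o.elim a w)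
    (p := fun o => o.elim x y) (by rintro (_ | j) hj; exacts [ha, hw j (by simpa using hj)])
    (by simpa [sum_insertNone] using hsum) (fun _ _ => Set.mem_univ _)
  simpa [sum_insertNone] using this

theorem sq_norm_smul_add_sum_smul_sub_le {E ι : Type*} [SeminormedAddCommGroup E]
    [NormedSpace ℝ E] (t : Finset ι) {a α β M : ℝ} {w : ι → ℝ} {x p : E} {y : ι → E}
    (ha : 0 ≤ a) (hw : ∀ j ∈ t, 0 ≤ w j) (hsum : a + ∑ j ∈ t, w j = 1)
    (hx : ‖x - p‖ ^ 2 ≤ α * M) (hy : ∀ j ∈ t, ‖y j - p‖ ^ 2 ≤ β * M) :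
    ‖a • x + ∑ j ∈ t, w j • y j - p‖ ^ 2 ≤ (a * α + (1 - a) * β) * M := by
  have hcentre : a • x + ∑ j ∈ t, w j • y j - p = a • (x - p) + ∑ j ∈ t, w j • (y j - p) := by
    simp only [smul_sub, sum_sub_distrib, ← sum_smul]
    rw [eq_sub_of_add_eq' hsum, sub_smul, one_smul]
    abel
  calc ‖a • x + ∑ j ∈ t, w j • y j - p‖ ^ 2
      ≤ a * ‖x - p‖ ^ 2 + ∑ j ∈ t, w j * ‖y j - p‖ ^ 2 := by
        rw [hcentre]; exact sq_norm_smul_add_sum_smul_le t _ _ ha hw hsum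
    _ ≤ a * (α * M) + ∑ j ∈ t, w j * (β * M) := by
        gcongr with j hj
        · exact hw j hj
        · exact hy j hj
    _ = (a * α + (1 - a) * β) * M := by
        rw [← sum_mul, eq_sub_of_add_eq' hsum]; ring

theorem sq_norm_sub_le_of_scaled_step {E : Type*} [SeminormedAddCommGroup E] (T : ℝ → E) (p : E)
    {δ L c r : ℝ} (hL : 0 < L) (hc0 : 0 < c) (hc1 : c ≤ 1)
    (h : ∀ Lt, L ≤ Lt → ‖T (1 / Lt) - p‖ ^ 2 ≤ (1 - δ / Lt) * r) :
    ‖T (c / L) - p‖ ^ 2 ≤ (1 - c * δ / L) * r := by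
  have := h (L / c) (le_div_self hL.le hc0 hc1)
  rwa [one_div_div, div_div_eq_mul_div, mul_comm δ] at this

theorem combination_rate_le {l m δ L : ℝ} (hml : m ≤ l) (hl : l ≤ 1) (hδ : 0 ≤ δ)
    (hL : 0 < L) :
    1 / (2 - l) * (1 - l * δ / L) + (1 - 1 / (2 - l)) * (1 - δ / L) ≤ 1 - m * δ / L := by
  have hgap : 0 < 2 - l := by linarith
  have hml' : m * (2 - l) ≤ 1 := by nlinarith [sq_nonneg (1 - l)]
  have hrate : 1 / (2 - l) * (1 - l * δ / L) + (1 - 1 / (2 - l)) * (1 - δ / L)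
      = 1 - δ / L / (2 - l) := by
    field_simp; ring
  rw [hrate, mul_div_assoc, sub_le_sub_iff_left, le_div_iff₀ hgap]
  nlinarith [div_nonneg hδ hL.le]

/-- **Contraction of the convex combination of projected gradient steps**
(Lemma 5.2 of the paper). Given the projected-GD contraction hypothesis for every
component `f j`, every point, and every step-control `L̃ ≥ L`, the point `s̃ᵢ` defined
as the convex combination of `U`-projected gradient steps contracts towards `x̄` with
ratio `1 - λ̄_min δ / L`. -/
theorem survey_descent_combination_contraction
    (n k : ℕ) [NeZero k] (f : Fin k → EuclideanSpace ℝ (Fin n) → ℝ)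
    (δ L : ℝ) (hδ : 0 < δ) (hδL : δ ≤ L)
    (projU : EuclideanSpace ℝ (Fin n) → EuclideanSpace ℝ (Fin n))
    (xbar : EuclideanSpace ℝ (Fin n))
    (hcontract : ∀ (j : Fin k) (x : EuclideanSpace ℝ (Fin n)) (Lt : ℝ), L ≤ Lt →
      ‖projU (x - (1 / Lt) • gradient (f j) x) - xbar‖ ^ 2 ≤ (1 - δ / Lt) * ‖x - xbar‖ ^ 2)
    (lam : Fin k → ℝ) (hlampos : ∀ j, 0 < lam j) (hlamsum : ∑ j, lam j = 1)
    (i : Fin k) (s : Fin k → EuclideanSpace ℝ (Fin n))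
    (stilde : EuclideanSpace ℝ (Fin n))
    (hstilde : stilde =
      (1 / (2 - lam i)) • projU (s i - (lam i / L) • gradient (f i) (s i)) +
        ∑ j ∈ Finset.univ.erase i,
          (lam j / (2 - lam i)) • projU (s j - (1 / L) • gradient (f j) (s j))) :
    ‖stilde - xbar‖ ^ 2 ≤
      (1 - (Finset.univ.inf' Finset.univ_nonempty lam) * δ / L) *
        Finset.univ.sup' Finset.univ_nonempty (fun j => ‖s j - xbar‖ ^ 2) := by
  have hL : 0 < L := hδ.trans_le hδL
  have hδL_div : δ / L ≤ 1 := div_le_one_of_le₀ hδL hL.le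
  have hlam_le_one : ∀ j, lam j ≤ 1 := fun j =>
    hlamsum ▸ single_le_sum (fun j _ => (hlampos j).le) (mem_univ j)
  have hgap : 0 < 2 - lam i := by linarith [hlam_le_one i]
  set M := univ.sup' univ_nonempty fun j => ‖s j - xbar‖ ^ 2
  have hM : ∀ j, ‖s j - xbar‖ ^ 2 ≤ M := fun j => le_sup' (fun j => ‖s j - xbar‖ ^ 2) (mem_univ j)
  have hstep_i : ‖projU (s i - (lam i / L) • gradient (f i) (s i)) - xbar‖ ^ 2
      ≤ (1 - lam i * δ / L) * M := by
    refine (sq_norm_sub_le_of_scaled_step (fun η => projU (s i - η • gradient (f i) (s i))) xbar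
      hL (hlampos i) (hlam_le_one i) (hcontract i (s i))).trans
      (mul_le_mul_of_nonneg_left (hM i) ?_)
    rw [sub_nonneg, mul_div_assoc]
    exact mul_le_one₀ (hlam_le_one i) (by positivity) hδL_div
  have hstep : ∀ j, ‖projU (s j - (1 / L) • gradient (f j) (s j)) - xbar‖ ^ 2 ≤ (1 - δ / L) * M :=
    fun j => (hcontract j (s j) L le_rfl).trans
      (mul_le_mul_of_nonneg_left (hM j) (sub_nonneg.2 hδL_div))
  have hweights : 1 / (2 - lam i) + ∑ j ∈ univ.erase i, lam j / (2 - lam i) = 1 := by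
    rw [← sum_div, sum_erase_eq_sub (mem_univ i), hlamsum]
    field_simp
    ring
  rw [hstilde]
  calc _ ≤ (1 / (2 - lam i) * (1 - lam i * δ / L) + (1 - 1 / (2 - lam i)) * (1 - δ / L)) * M :=
        sq_norm_smul_add_sum_smul_sub_le _ (by positivity)
          (fun j _ => div_nonneg (hlampos j).le hgap.le) hweights hstep_i (fun j _ => hstep j)
    _ ≤ _ := by
      gcongr
      · exact (sq_nonneg _).trans (hM i)
      · exact combination_rate_le (inf'_le _ (mem_univ i)) (hlam_le_one i) hδ.le hL
end

section
/- Let z₁,...,z_m ∈ ℝⁿ be linearly independent with m ≤ n, set r_j = ‖z_j‖ for each j, and A = {x ∈ ℝⁿ : z_jᵀx equal for all j}. Then 0 ∈ A, A is a linear subspace of dimension n - m + 1, and the common projection c = proj_A(z_j) is nonzero. -/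
/-!
The central subspace is the orthogonal complement of the vector span `W` of the centers
`z₁, …, z_m`, which is a linear subspace of dimension `m - 1` because linearly independent
vectors are affinely independent. If the projection `c` of each `z_j` onto `Wᗮ` were `0`, every
`z_j` would lie in `Wᗮᗮ = W`, so their span, of dimension `m`, would fit into `W`.
-/

open RealInnerProductSpace

section

variable {E : Type*} [NormedAddCommGroup E] [InnerProductSpace ℝ E]

theorem mem_orthogonal_vectorSpan_range_iff {ι : Type*} (z : ι → E) (x : E) :
    x ∈ (vectorSpan ℝ (Set.range z))ᗮ ↔ ∀ i j, ⟪z i, x⟫ = ⟪z j, x⟫ := by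
  rw [vectorSpan_def, ← Submodule.span_singleton_le_iff_mem, ← Submodule.isOrtho_iff_le,
    Submodule.isOrtho_span]
  simp [Set.mem_vsub, forall_comm (α := E), inner_sub_right, sub_eq_zero, real_inner_comm x]

theorem Submodule.sub_mem_orthogonal_of_forall_norm_sub_le {K : Submodule ℝ E} {u v : E}
    (hv : v ∈ K) (h : ∀ w ∈ K, ‖u - v‖ ≤ ‖u - w‖) : u - v ∈ Kᗮ := by
  rw [Submodule.mem_orthogonal']
  refine (K.norm_eq_iInf_iff_real_inner_eq_zero hv).1 <| le_antisymm ?_ ?_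
  · exact le_ciInf fun w => h w w.2
  · exact ciInf_le (f := fun w : (K : Set E) => ‖u - w‖)
      ⟨0, Set.forall_mem_range.2 fun _ => norm_nonneg _⟩ ⟨v, hv⟩

theorem LinearIndependent.finrank_vectorSpan_range {ι : Type*} [Fintype ι] [Nonempty ι]
    {z : ι → E} (hz : LinearIndependent ℝ z) :
    Module.finrank ℝ (vectorSpan ℝ (Set.range z)) = Fintype.card ι - 1 :=
  hz.affineIndependent.finrank_vectorSpan (Nat.succ_pred_eq_of_pos Fintype.card_pos).symm

theorem LinearIndependent.range_not_subset_vectorSpan {ι : Type*} [Fintype ι] [Nonempty ι]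
    {z : ι → E} (hz : LinearIndependent ℝ z) : ¬Set.range z ⊆ vectorSpan ℝ (Set.range z) := by
  intro hsub
  have hle := Submodule.finrank_mono (Submodule.span_le.2 hsub)
  rw [finrank_span_eq_card hz, hz.finrank_vectorSpan_range] at hle
  have := Fintype.card_pos (α := ι)
  omega

end

theorem mbp_base_case_general
    (n m : ℕ) (hm : 0 < m) (hmn : m ≤ n)
    (z : Fin m → EuclideanSpace ℝ (Fin n)) (hli : LinearIndependent ℝ z)
    (A : Set (EuclideanSpace ℝ (Fin n)))
    (hA : A = {x | ∀ i j : Fin m, ⟪z i, x⟫ = ⟪z j, x⟫})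
    (c : EuclideanSpace ℝ (Fin n))
    (hcproj : ∀ j : Fin m, ∀ q ∈ A, ‖z j - c‖ ≤ ‖z j - q‖) :
    (0 : EuclideanSpace ℝ (Fin n)) ∈ A ∧
    (∃ S : Submodule ℝ (EuclideanSpace ℝ (Fin n)),
      (S : Set (EuclideanSpace ℝ (Fin n))) = A ∧ Module.finrank ℝ S = n - m + 1) ∧
    c ≠ 0 := by
  have : Nonempty (Fin m) := ⟨⟨0, hm⟩⟩
  set W := vectorSpan ℝ (Set.range z)
  have hWA : (Wᗮ : Set (EuclideanSpace ℝ (Fin n))) = A := by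
    ext x
    rw [hA]
    exact mem_orthogonal_vectorSpan_range_iff z x
  refine ⟨hWA ▸ Wᗮ.zero_mem, ⟨Wᗮ, hWA, ?_⟩, ?_⟩
  · have hdim := W.finrank_add_finrank_orthogonal
    rw [hli.finrank_vectorSpan_range, Fintype.card_fin, finrank_euclideanSpace_fin] at hdim
    omega
  · rintro rfl
    refine hli.range_not_subset_vectorSpan (Set.range_subset_iff.2 fun j => ?_)
    have hzj := Wᗮ.sub_mem_orthogonal_of_forall_norm_sub_le Wᗮ.zero_mem
      fun q hq => hcproj j q (hWA ▸ hq)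
    rwa [sub_zero, W.orthogonal_orthogonal] at hzj

/-- **The base case** (Lemma A.6 of the paper). At base parameters (`r_j = ‖z_j‖` with
`z_1,…,z_m` linearly independent, `m ≤ n`), the central affine subspace
`A = {x : zⱼᵀx` equal for all `j}` contains the origin, is a linear subspace of
dimension `n - m + 1`, and the common projection `c` of the centers onto `A` is
nonzero. -/
theorem mbp_base_case
    (n m : ℕ) (hm : 0 < m) (hmn : m ≤ n)
    (z : Fin m → EuclideanSpace ℝ (Fin n)) (hli : LinearIndependent ℝ z)
    (r : Fin m → ℝ) (hr : ∀ j, r j = ‖z j‖)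
    (A : Set (EuclideanSpace ℝ (Fin n)))
    (hA : A = {x | ∀ i j : Fin m, ⟪z i, x⟫ = ⟪z j, x⟫})
    (c : EuclideanSpace ℝ (Fin n)) (hcA : c ∈ A)
    (hcproj : ∀ j : Fin m, ∀ q ∈ A, ‖z j - c‖ ≤ ‖z j - q‖) :
    (0 : EuclideanSpace ℝ (Fin n)) ∈ A ∧
    (∃ S : Submodule ℝ (EuclideanSpace ℝ (Fin n)),
      (S : Set (EuclideanSpace ℝ (Fin n))) = A ∧ Module.finrank ℝ S = n - m + 1) ∧
    c ≠ 0 :=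
  mbp_base_case_general n m hm hmn z hli A hA c hcproj
end
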